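/- Let $\epsilon > 0$ and $\alpha \in (1,2]$. Let $h:\mathcal S\times\mathcal X\to\mathbb Z_q^m$ be 2-universal, let $X$ be a random variable on $\mathcal X$, $S$ uniform on $\mathcal S$ independent of $X$, $U$ uniform on $\mathbb Z_q^m$. If $m \le H_\alpha(X) - \frac{1}{\alpha-1}\log_q\big(\frac{1}{\epsilon(\alpha-1)\ln q}\big)$, then $D_\alpha(P_{(h(S,X),S)}\|P_U\times P_S) \le \epsilon$. -/

import Mathlib

open Finset

/-- Joint pmf of the pair `(h(S,X), S)` where `S` is uniform on `𝒮` and `X ~ P` is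
independent of `S`. -/
noncomputable def jointPMF {S X : Type*} [Fintype S] [Fintype X] {q m : ℕ}
    (h : S → X → (Fin m → Fin q)) (P : X → ℝ) : (Fin m → Fin q) × S → ℝ :=
  fun p => (Fintype.card S : ℝ)⁻¹ * ∑ x : X, if h p.2 x = p.1 then P x else 0

/-- Rényi divergence of order `α > 1` (base-`q` logarithm). -/
noncomputable def renyiD {Z : Type*} [Fintype Z] (q : ℕ) (α : ℝ) (P Q : Z → ℝ) : ℝ :=
  (α - 1)⁻¹ * Real.logb q (∑ z, P z ^ α * Q z ^ (1 - α))

/-- Rényi entropy of order `α > 1` (base-`q` logarithm). -/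
noncomputable def renyiH {X : Type*} [Fintype X] (q : ℕ) (α : ℝ) (P : X → ℝ) : ℝ :=
  (1 - α)⁻¹ * Real.logb q (∑ x, P x ^ α)

/-!
Write `β = α - 1 ∈ (0, 1]` and `A(u, s)` for the `P`-mass of the bucket `h(s, ·)⁻¹(u)`. Up to the
normalisation, the Rényi sum is `∑_{u,s} A(u,s)^α = ∑_{s,x} P(x) A(h(s,x), s)^β`. The bucket of `x`
is `P(x)` plus the mass of the inputs colliding with `x`, so subadditivity of `t ↦ t^β` and concave
Jensen over the seed bound the inner average by `P(x)^β + (q^{-m})^β`, since universality makes the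
expected colliding mass at most `q^{-m}`. This is the bound `q^{βD} ≤ 1 + q^{β(m - H_α)}`, and
`log_q (1 + y) ≤ y / ln q` turns the entropy hypothesis into `D ≤ ε`.
-/

lemma Real.sum_rpow_le_card_mul_rpow_average {ι : Type*} [Fintype ι] [Nonempty ι] {p : ℝ}
    (hp₀ : 0 ≤ p) (hp₁ : p ≤ 1) {f : ι → ℝ} (hf : ∀ i, 0 ≤ f i) :
    ∑ i, f i ^ p ≤ Fintype.card ι * ((∑ i, f i) / Fintype.card ι) ^ p := by
  have hN : (0 : ℝ) < Fintype.card ι := by exact_mod_cast Fintype.card_pos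
  have hJensen := (Real.concaveOn_rpow hp₀ hp₁).le_map_sum (t := univ)
    (w := fun _ => (Fintype.card ι : ℝ)⁻¹) (p := f) (fun _ _ => by positivity)
    (by simp [hN.ne']) (fun i _ => hf i)
  simp only [smul_eq_mul, ← mul_sum] at hJensen
  rw [div_eq_inv_mul]
  rwa [inv_mul_le_iff₀ hN] at hJensen

lemma Real.logb_le_div_log_of_le_one_add {b x y : ℝ} (hb : 1 < b) (hx : 0 ≤ x) (hy : 0 ≤ y)
    (hxy : x ≤ 1 + y) : logb b x ≤ y / log b := by
  rw [Real.logb]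
  gcongr
  · exact (Real.log_pos hb).le
  rcases hx.eq_or_lt with rfl | hx
  · simpa
  · linarith [Real.log_le_sub_one_of_pos hx]

section Hashing

variable {S X Y : Type*} [DecidableEq Y] (h : S → X → Y) (P : X → ℝ)

def IsUniversalHash [Fintype S] (δ : ℝ) : Prop :=
  ∀ x₁ x₂ : X, x₁ ≠ x₂ →
    ((univ.filter fun s : S => h s x₁ = h s x₂).card : ℝ) / (Fintype.card S : ℝ) ≤ δ

noncomputable def bucketMass [Fintype X] (u : Y) (s : S) : ℝ :=
  ∑ x, if h s x = u then P x else 0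

noncomputable def collisionMass [Fintype X] [DecidableEq X] (x : X) (s : S) : ℝ :=
  ∑ x' ∈ univ.erase x, if h s x' = h s x then P x' else 0

variable {h P}

lemma bucketMass_nonneg [Fintype X] (hP : ∀ x, 0 ≤ P x) (u : Y) (s : S) :
    0 ≤ bucketMass h P u s :=
  sum_nonneg fun x _ => by split <;> simp [hP x]

lemma collisionMass_nonneg [Fintype X] [DecidableEq X] (hP : ∀ x, 0 ≤ P x) (x : X) (s : S) :
    0 ≤ collisionMass h P x s :=
  sum_nonneg fun x' _ => by split <;> simp [hP x']

lemma bucketMass_self [Fintype X] [DecidableEq X] (x : X) (s : S) :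
    bucketMass h P (h s x) s = P x + collisionMass h P x s := by
  rw [bucketMass, ← add_sum_erase _ _ (mem_univ x), if_pos rfl, collisionMass]

lemma sum_bucketMass_rpow_eq [Fintype X] [Fintype Y] (hP : ∀ x, 0 ≤ P x) {α : ℝ} (hα : α ≠ 0)
    (s : S) : ∑ u, bucketMass h P u s ^ α = ∑ x, P x * bucketMass h P (h s x) s ^ (α - 1) := by
  have hsplit : ∀ u, bucketMass h P u s ^ α = bucketMass h P u s ^ (α - 1) * bucketMass h P u s :=
    fun u => by
      rw [← Real.rpow_add_one' (bucketMass_nonneg hP u s) (by simpa using hα), sub_add_cancel]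
  simp_rw [hsplit, bucketMass, mul_sum, mul_ite, mul_zero]
  rw [sum_comm]
  refine sum_congr rfl fun x _ => ?_
  rw [sum_ite_eq, if_pos (mem_univ _), mul_comm]

variable [Fintype S] [Nonempty S] [Fintype X] [DecidableEq X] {δ : ℝ}

lemma sum_collisionMass_le (hP : ∀ x, 0 ≤ P x) (hP1 : ∑ x, P x = 1) (hδ : 0 ≤ δ)
    (hh : IsUniversalHash h δ) (x : X) :
    ∑ s, collisionMass h P x s ≤ Fintype.card S * δ := by
  have hN : (0 : ℝ) < Fintype.card S := by exact_mod_cast Fintype.card_pos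
  calc ∑ s, collisionMass h P x s
      = ∑ x' ∈ univ.erase x, ((univ.filter fun s : S => h s x' = h s x).card : ℝ) * P x' := by
        simp_rw [collisionMass]
        rw [sum_comm]
        exact sum_congr rfl fun x' _ => by rw [← sum_filter, sum_const, nsmul_eq_mul]
    _ ≤ ∑ x' ∈ univ.erase x, Fintype.card S * δ * P x' := by
        refine sum_le_sum fun x' hx' => mul_le_mul_of_nonneg_right ?_ (hP x')
        rw [mul_comm, ← div_le_iff₀ hN]
        exact hh x' x (ne_of_mem_erase hx')
    _ ≤ Fintype.card S * δ * ∑ x', P x' := by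
        rw [← mul_sum]
        exact mul_le_mul_of_nonneg_left
          (sum_le_sum_of_subset_of_nonneg (subset_univ _) fun x' _ _ => hP x') (by positivity)
    _ = Fintype.card S * δ := by rw [hP1, mul_one]

lemma sum_bucketMass_self_rpow_le (hP : ∀ x, 0 ≤ P x) (hP1 : ∑ x, P x = 1) (hδ : 0 ≤ δ)
    (hh : IsUniversalHash h δ) {β : ℝ} (hβ₀ : 0 ≤ β) (hβ₁ : β ≤ 1) (x : X) :
    ∑ s, bucketMass h P (h s x) s ^ β ≤ Fintype.card S * (P x ^ β + δ ^ β) := by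
  have hN : (0 : ℝ) < Fintype.card S := by exact_mod_cast Fintype.card_pos
  have hB := collisionMass_nonneg (h := h) hP x
  have hmean : (∑ s, collisionMass h P x s) / Fintype.card S ≤ δ := by
    rw [div_le_iff₀ hN, mul_comm]
    exact sum_collisionMass_le hP hP1 hδ hh x
  calc ∑ s, bucketMass h P (h s x) s ^ β
      ≤ ∑ s, (P x ^ β + collisionMass h P x s ^ β) := by
        simp_rw [bucketMass_self]
        exact sum_le_sum fun s _ => Real.rpow_add_le_add_rpow (hP x) (hB s) hβ₀ hβ₁
    _ ≤ Fintype.card S * P x ^ β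
          + Fintype.card S * ((∑ s, collisionMass h P x s) / Fintype.card S) ^ β := by
        rw [sum_add_distrib, sum_const, card_univ, nsmul_eq_mul]
        gcongr
        exact Real.sum_rpow_le_card_mul_rpow_average hβ₀ hβ₁ hB
    _ ≤ Fintype.card S * (P x ^ β + δ ^ β) := by
        rw [mul_add]
        gcongr
        exact div_nonneg (sum_nonneg fun s _ => hB s) hN.le

lemma sum_sum_bucketMass_rpow_le [Fintype Y] (hP : ∀ x, 0 ≤ P x) (hP1 : ∑ x, P x = 1)
    (hδ : 0 ≤ δ) (hh : IsUniversalHash h δ) {α : ℝ} (hα₁ : 1 < α) (hα₂ : α ≤ 2) :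
    ∑ s, ∑ u, bucketMass h P u s ^ α
      ≤ Fintype.card S * (∑ x, P x ^ α + δ ^ (α - 1)) := by
  have hα : ∀ x, P x * P x ^ (α - 1) = P x ^ α := fun x => by
    rw [mul_comm, ← Real.rpow_add_one' (hP x) (by linarith), sub_add_cancel]
  calc ∑ s, ∑ u, bucketMass h P u s ^ α
      = ∑ x, P x * ∑ s, bucketMass h P (h s x) s ^ (α - 1) := by
        simp_rw [sum_bucketMass_rpow_eq hP (by linarith : α ≠ 0), mul_sum]
        exact sum_comm
    _ ≤ ∑ x, P x * (Fintype.card S * (P x ^ (α - 1) + δ ^ (α - 1))) :=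
        sum_le_sum fun x _ => mul_le_mul_of_nonneg_left
          (sum_bucketMass_self_rpow_le hP hP1 hδ hh (by linarith) (by linarith) x) (hP x)
    _ = Fintype.card S * (∑ x, P x ^ α + δ ^ (α - 1)) := by
        simp_rw [mul_add, sum_add_distrib, mul_left_comm (P _), hα]
        rw [← mul_sum, ← mul_sum, ← sum_mul, hP1, one_mul]

end Hashing

lemma rpow_mul_sub_renyiH {X : Type*} [Fintype X] {b : ℕ} (hb : 1 < b) {α : ℝ} (hα : α ≠ 1)
    {P : X → ℝ} (hT : 0 < ∑ x, P x ^ α) (r : ℝ) :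
    (b : ℝ) ^ ((α - 1) * (r - renyiH b α P)) = (b : ℝ) ^ ((α - 1) * r) * ∑ x, P x ^ α := by
  have hb' : (1 : ℝ) < b := by exact_mod_cast hb
  have hα' : 1 - α ≠ 0 := sub_ne_zero.2 hα.symm
  have hexponent : (α - 1) * (r - renyiH b α P) = (α - 1) * r + Real.logb b (∑ x, P x ^ α) := by
    rw [renyiH]
    field_simp
    ring
  rw [hexponent, Real.rpow_add (by positivity), Real.rpow_logb (by positivity) hb'.ne' hT]

lemma rpow_mul_sub_le_of_le_sub_logb {b β r H t : ℝ} (hb : 1 < b) (hβ : 0 < β) (ht : 0 < t)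
    (hr : r ≤ H - β⁻¹ * Real.logb b (1 / t)) : b ^ (β * (r - H)) ≤ t := by
  have hexponent : β * (r - H) ≤ Real.logb b t := by
    rw [one_div, Real.logb_inv] at hr
    rw [← le_inv_mul_iff₀ hβ]
    linarith
  calc b ^ (β * (r - H)) ≤ b ^ Real.logb b t := Real.rpow_le_rpow_of_exponent_le hb.le hexponent
    _ = t := Real.rpow_logb (by linarith) hb.ne' ht

section JointPMF

variable {S X : Type*} [Fintype S] [Fintype X] {q m : ℕ} {h : S → X → (Fin m → Fin q)}
  {P : X → ℝ}

lemma jointPMF_eq (z : (Fin m → Fin q) × S) :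
    jointPMF h P z = (Fintype.card S : ℝ)⁻¹ * bucketMass h P z.1 z.2 :=
  rfl

lemma jointPMF_nonneg (hP : ∀ x, 0 ≤ P x) (z : (Fin m → Fin q) × S) : 0 ≤ jointPMF h P z :=
  mul_nonneg (by positivity) (bucketMass_nonneg hP _ _)

variable [Nonempty S]

lemma jointPMF_rpow_mul_rpow (hP : ∀ x, 0 ≤ P x) {c : ℝ} (hc : 0 < c) (α : ℝ)
    (z : (Fin m → Fin q) × S) :
    jointPMF h P z ^ α * (c⁻¹ * (Fintype.card S : ℝ)⁻¹) ^ (1 - α)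
      = c ^ (α - 1) * (Fintype.card S : ℝ)⁻¹ * bucketMass h P z.1 z.2 ^ α := by
  have hN : (0 : ℝ) < Fintype.card S := by exact_mod_cast Fintype.card_pos
  have hreference : (c⁻¹ * (Fintype.card S : ℝ)⁻¹) ^ (1 - α)
      = c ^ (α - 1) * ((Fintype.card S : ℝ) ^ α / Fintype.card S) := by
    rw [← mul_inv, Real.inv_rpow (by positivity), ← Real.rpow_neg (by positivity), neg_sub,
      Real.mul_rpow hc.le hN.le, Real.rpow_sub_one hN.ne']
  rw [jointPMF_eq, hreference, Real.mul_rpow (by positivity) (bucketMass_nonneg hP _ _),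
    Real.inv_rpow hN.le]
  field_simp

lemma sum_jointPMF_rpow_le (hP : ∀ x, 0 ≤ P x) (hP1 : ∑ x, P x = 1) {c : ℝ} (hc : 0 < c)
    (hh : IsUniversalHash h c⁻¹) {α : ℝ} (hα₁ : 1 < α) (hα₂ : α ≤ 2) :
    ∑ z, jointPMF h P z ^ α * (c⁻¹ * (Fintype.card S : ℝ)⁻¹) ^ (1 - α)
      ≤ 1 + c ^ (α - 1) * ∑ x, P x ^ α := by
  classical
  simp_rw [jointPMF_rpow_mul_rpow hP hc]
  rw [← mul_sum, Fintype.sum_prod_type, sum_comm]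
  calc c ^ (α - 1) * (Fintype.card S : ℝ)⁻¹ * ∑ s, ∑ u, bucketMass h P u s ^ α
      ≤ c ^ (α - 1) * (Fintype.card S : ℝ)⁻¹
          * (Fintype.card S * (∑ x, P x ^ α + c⁻¹ ^ (α - 1))) := by
        gcongr
        exact sum_sum_bucketMass_rpow_le hP hP1 (by positivity) hh hα₁ hα₂
    _ = 1 + c ^ (α - 1) * ∑ x, P x ^ α := by
        rw [Real.inv_rpow hc.le]
        field_simp
        ring

lemma sum_jointPMF_rpow_le_one_add_rpow (hq : 1 < q) (hP : ∀ x, 0 ≤ P x) (hP1 : ∑ x, P x = 1)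
    (hh : IsUniversalHash h ((q : ℝ) ^ m)⁻¹) {α : ℝ} (hα₁ : 1 < α) (hα₂ : α ≤ 2) :
    ∑ z, jointPMF h P z ^ α * (((q : ℝ) ^ m)⁻¹ * (Fintype.card S : ℝ)⁻¹) ^ (1 - α)
      ≤ 1 + (q : ℝ) ^ ((α - 1) * (m - renyiH q α P)) := by
  have hT : 0 < ∑ x, P x ^ α := by
    obtain ⟨x, -, hx⟩ := (sum_pos_iff_of_nonneg fun x _ => hP x).1 (hP1 ▸ one_pos)
    exact lt_of_lt_of_le (Real.rpow_pos_of_pos hx α)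
      (single_le_sum (fun x _ => Real.rpow_nonneg (hP x) α) (mem_univ x))
  rw [rpow_mul_sub_renyiH hq hα₁.ne' hT, mul_comm (α - 1), Real.rpow_mul (by positivity),
    Real.rpow_natCast]
  exact sum_jointPMF_rpow_le hP hP1 (by positivity) hh hα₁ hα₂

end JointPMF

theorem lhl_fractional_order_general {S X : Type*} [Fintype S] [Fintype X] [Nonempty S]
    (q m : ℕ) (hq : 2 ≤ q)
    (α : ℝ) (hα1 : 1 < α) (hα2 : α ≤ 2) (ε : ℝ) (hε : 0 < ε)
    (h : S → X → (Fin m → Fin q)) (P : X → ℝ)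
    (hP0 : ∀ x, 0 ≤ P x) (hP1 : ∑ x, P x = 1)
    (hUniv : ∀ x₁ x₂ : X, x₁ ≠ x₂ →
      ((univ.filter fun s : S => h s x₁ = h s x₂).card : ℝ) / (Fintype.card S : ℝ)
        ≤ ((q : ℝ) ^ m)⁻¹)
    (hmH : (m : ℝ) ≤ renyiH q α P
        - (α - 1)⁻¹ * Real.logb q (1 / (ε * (α - 1) * Real.log q))) :
    renyiD q α (jointPMF h P) (fun _ => ((q : ℝ) ^ m)⁻¹ * (Fintype.card S : ℝ)⁻¹) ≤ ε := by
  have hq' : (1 : ℝ) < q := by exact_mod_cast hq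
  have hβ : 0 < α - 1 := by linarith
  have hlog : 0 < Real.log q := Real.log_pos hq'
  have hsum := sum_jointPMF_rpow_le_one_add_rpow hq hP0 hP1 hUniv hα1 hα2
  have hy : (q : ℝ) ^ ((α - 1) * (m - renyiH q α P)) ≤ ε * (α - 1) * Real.log q :=
    rpow_mul_sub_le_of_le_sub_logb hq' hβ (by positivity) hmH
  have hsum₀ : 0 ≤ ∑ z, jointPMF h P z ^ α * (((q : ℝ) ^ m)⁻¹ * (Fintype.card S : ℝ)⁻¹) ^ (1 - α) :=
    sum_nonneg fun z _ =>
      mul_nonneg (Real.rpow_nonneg (jointPMF_nonneg hP0 z) α) (Real.rpow_nonneg (by positivity) _)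
  calc renyiD q α (jointPMF h P) (fun _ => ((q : ℝ) ^ m)⁻¹ * (Fintype.card S : ℝ)⁻¹)
      ≤ (α - 1)⁻¹ * ((q : ℝ) ^ ((α - 1) * (m - renyiH q α P)) / Real.log q) := by
        rw [renyiD]
        gcongr
        exact Real.logb_le_div_log_of_le_one_add hq' hsum₀ (by positivity) hsum
    _ ≤ (α - 1)⁻¹ * (ε * (α - 1) * Real.log q / Real.log q) := by gcongr
    _ = ε := by field_simp

/-- Corollary 3.5: for a 2-universal hash function and `α ∈ (1,2]`, if
`m ≤ H_α(X) - (α-1)⁻¹ log_q(1/(ε(α-1)ln q))` then `D_α(P_{(h(S,X),S)} ‖ P_U × P_S) ≤ ε`. -/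
theorem lhl_fractional_order {S X : Type*} [Fintype S] [Fintype X] [Nonempty S] [Nonempty X]
    (q m : ℕ) (hq : 2 ≤ q) (hm : 1 ≤ m)
    (α : ℝ) (hα1 : 1 < α) (hα2 : α ≤ 2) (ε : ℝ) (hε : 0 < ε)
    (h : S → X → (Fin m → Fin q)) (P : X → ℝ)
    (hP0 : ∀ x, 0 ≤ P x) (hP1 : ∑ x, P x = 1)
    (hUniv : ∀ x₁ x₂ : X, x₁ ≠ x₂ →
      ((univ.filter fun s : S => h s x₁ = h s x₂).card : ℝ) / (Fintype.card S : ℝ)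
        ≤ ((q : ℝ) ^ m)⁻¹)
    (hmH : (m : ℝ) ≤ renyiH q α P
        - (α - 1)⁻¹ * Real.logb q (1 / (ε * (α - 1) * Real.log q))) :
    renyiD q α (jointPMF h P) (fun _ => ((q : ℝ) ^ m)⁻¹ * (Fintype.card S : ℝ)⁻¹) ≤ ε :=
  lhl_fractional_order_general q m hq α hα1 hα2 ε hε h P hP0 hP1 hUniv hmH
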